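/- arXiv:1904.08989 — 2 statements merged into one kernel-verified Lean document; each statement's English description precedes it below -/
import Mathlib

section
/- If Γ is the disjoint union of α simplices, each a d-simplex on pairwise disjoint vertex sets, then the h-vector of Γ satisfies h_0 = 1 and h_k = (−1)^{k+1} (α − 1) C(d+1, k) for all 1 ≤ k ≤ d. -/
/-- The simplicial complex which is the disjoint union of the full power sets
(simplices) on the vertex sets `V i`. -/
def complexOf {α : ℕ} (V : Fin α → Finset ℕ) : Finset (Finset ℕ) :=
  Finset.univ.biUnion fun i => (V i).powerset

/-- `fvec V i` is the number of faces of cardinality `i`; `fvec V 0 = 1` counts the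
empty face. -/
def fvec {α : ℕ} (V : Fin α → Finset ℕ) (i : ℕ) : ℕ :=
  ((complexOf V).filter fun S => S.card = i).card

/-- The h-vector: `hvec D f k = ∑_{i=0}^{k} (-1)^(k-i) C(D-i, D-k) f i`, with `D = d+1`. -/
def hvec (D : ℕ) (f : ℕ → ℕ) (k : ℕ) : ℤ :=
  ∑ i ∈ Finset.range (k + 1), (-1 : ℤ) ^ (k - i) * ((D - i).choose (D - k)) * f i


/-! Away from the empty face the complex has `α` times the face numbers of one simplex, so its
f-vector is `α • (C(D, i))ᵢ + (1 - α) • δ₀`, and the h-vector is linear in the f-vector. The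
simplex has h-vector `(1, 0, …, 0)`: from `C(D-i, D-k) C(D, i) = C(D, k) C(k, i)` its `k`-th
entry is `C(D, k) (1 - 1)^k`. The empty face contributes `(-1)^k C(D, k)`. -/

open Finset Function

section FaceCounts

variable {α : ℕ} (V : Fin α → Finset ℕ)

theorem filter_card_complexOf (i : ℕ) :
    (complexOf V).filter (fun S => S.card = i) = univ.biUnion fun j => (V j).powersetCard i := by
  simp only [complexOf, filter_biUnion, powersetCard_eq_filter]

theorem fvec_zero (hα : 0 < α) : fvec V 0 = 1 := by
  have : Nonempty (Fin α) := ⟨⟨0, hα⟩⟩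
  rw [fvec, filter_card_complexOf, card_eq_one]
  exact ⟨∅, by ext; simp⟩

theorem fvec_eq_sum_card_choose (hV : Pairwise (Disjoint on V)) {i : ℕ} (hi : 1 ≤ i) :
    fvec V i = ∑ j, (V j).card.choose i := by
  rw [fvec, filter_card_complexOf, card_biUnion]
  · simp only [card_powersetCard]
  · intro a _ b _ hab
    refine disjoint_left.2 fun S hSa hSb => ?_
    rw [mem_powersetCard] at hSa hSb
    obtain ⟨x, hx⟩ := card_pos.1 (hSa.2 ▸ hi)
    exact disjoint_left.1 (hV hab) (hSa.1 hx) (hSb.1 hx)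

end FaceCounts

theorem hvec_choose {D k : ℕ} (hk : k ≤ D) : hvec D D.choose k = 0 ^ k := by
  have hterm : ∀ i ∈ range (k + 1), (-1 : ℤ) ^ (k - i) * ((D - i).choose (D - k) : ℕ) * D.choose i
      = D.choose k * (1 ^ i * (-1) ^ (k - i) * k.choose i) := by
    intro i hi
    have hik : i ≤ k := Nat.lt_succ_iff.1 (mem_range.1 hi)
    have hsymm : (D - i).choose (D - k) = (D - i).choose (k - i) := by
      rw [← Nat.choose_symm (by omega : k - i ≤ D - i)]
      congr 1
      omega
    have hmul : D.choose k * k.choose i = D.choose i * (D - i).choose (k - i) :=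
      Nat.choose_mul hik
    rw [hsymm, one_pow, one_mul]
    have := congrArg (Nat.cast (R := ℤ)) hmul
    push_cast at this
    linear_combination (-(-1 : ℤ) ^ (k - i)) * this
  rw [hvec, sum_congr rfl hterm, ← mul_sum, ← add_pow, add_neg_cancel]
  rcases k.eq_zero_or_pos with rfl | hk0
  · simp
  · simp [zero_pow hk0.ne']

theorem hvec_of_eq_mul_choose {D a : ℕ} {f : ℕ → ℕ} (hf0 : f 0 = 1)
    (hf : ∀ i, 1 ≤ i → f i = a * D.choose i) {k : ℕ} (hk : k ≤ D) :
    hvec D f k = a * 0 ^ k + (1 - a) * (-1) ^ k * D.choose k := by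
  have hcast : ∀ i, (f i : ℤ) = a * D.choose i + (1 - a) * if i = 0 then 1 else 0 := by
    rintro (_ | i)
    · simp [hf0]
    · simp [hf (i + 1) (Nat.le_add_left 1 i)]
  rw [← hvec_choose hk, hvec, hvec, mul_sum]
  simp only [hcast, mul_add, sum_add_distrib]
  congr 1
  · refine sum_congr rfl fun i _ => ?_
    ring
  · rw [sum_eq_single_of_mem 0 (by simp)]
    · simp only [tsub_zero, Nat.choose_symm hk, if_pos, mul_one]
      ring
    · intro i _ hi
      simp [hi]

theorem stmt3 {α : ℕ} (hα : 0 < α) (d : ℕ) (V : Fin α → Finset ℕ)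
    (hdisj : ∀ i j : Fin α, i ≠ j → Disjoint (V i) (V j))
    (hcard : ∀ i, (V i).card = d + 1) :
    hvec (d + 1) (fvec V) 0 = 1 ∧
    ∀ k, 1 ≤ k → k ≤ d →
      hvec (d + 1) (fvec V) k = (-1 : ℤ) ^ (k + 1) * ((α : ℤ) - 1) * ((d + 1).choose k) := by
  have hf : ∀ i, 1 ≤ i → fvec V i = α * (d + 1).choose i := fun i hi => by
    simp [fvec_eq_sum_card_choose V hdisj hi, hcard]
  have hvec_eq := fun k (hk : k ≤ d + 1) => hvec_of_eq_mul_choose (fvec_zero V hα) hf hk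
  refine ⟨by simpa using hvec_eq 0 (Nat.zero_le _), fun k hk1 hkd => ?_⟩
  rw [hvec_eq k (by omega), zero_pow (by omega)]
  ring
end

section
/- Let p ≥ 5 be prime. For i odd and j nonzero even in Z/2pZ, the set {i, j} is (2p − 3)-zero-sumfree if and only if i ≡ j mod p or j ≡ −2i mod 2p. -/
/-- A finite subset `S` of `ZMod n` is `ℓ`-zero-sumfree if no multiset of `ℓ` elements
of `S` (with repetition, encoded by a multiplicity function `c`) sums to `0`. -/
def IsZeroSumfree (n ℓ : ℕ) (S : Finset (ZMod n)) : Prop :=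
  ∀ c : ZMod n → ℕ, (∑ x ∈ S, c x) = ℓ → (∑ x ∈ S, c x • x) ≠ 0

/-!
By the Chinese remainder theorem, `ZMod (2 * p) ≅ ZMod 2 × ZMod p`. Write `x, y` for the
residues of `i, j` mod `p`. A sum `a • i + b • j` with `a + b = 2p - 3` vanishes iff `a` is even
(since `i` is odd and `j` even) and `a x + b y = 0` mod `p`, i.e. `a (x - y) = 3 y` as
`b ≡ -3 - a`. If `x = y` this is impossible, as `p ∤ 3 y`. Otherwise `a` must be congruent to
`t = 3 y / (x - y)`, and some even `a ≤ 2p - 3` lies in that class unless `t = -2`, whose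
representatives `p - 2` and `2p - 2` are odd or too large; and `t = -2` means `y = -2 x`.
-/

lemma isZeroSumfree_pair_iff {n ℓ : ℕ} {i j : ZMod n} (hij : i ≠ j) :
    IsZeroSumfree n ℓ {i, j} ↔ ∀ a b : ℕ, a + b = ℓ → a • i + b • j ≠ 0 := by
  simp only [IsZeroSumfree, Finset.sum_pair hij]
  refine ⟨fun H a b hab => ?_, fun H c hc => H _ _ hc⟩
  simpa [hij, hij.symm] using H (fun x => if x = i then a else b) (by simpa [hij.symm] using hab)

theorem ZMod.eq_zero_iff_castHom_eq_zero {m n : ℕ} (h : m.Coprime n) (x : ZMod (m * n)) :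
    x = 0 ↔ castHom (dvd_mul_right m n) (ZMod m) x = 0 ∧
      castHom (dvd_mul_left n m) (ZMod n) x = 0 := by
  have hfst : (RingHom.fst _ _).comp (chineseRemainder h).toRingHom =
    castHom (dvd_mul_right m n) (ZMod m) := RingHom.ext_zmod _ _
  have hsnd : (RingHom.snd _ _).comp (chineseRemainder h).toRingHom =
    castHom (dvd_mul_left n m) (ZMod n) := RingHom.ext_zmod _ _
  rw [← hfst, ← hsnd, ← (chineseRemainder h).map_eq_zero_iff, Prod.ext_iff]
  rfl

lemma ZMod.castHom_eq_natCast_val_mod {m n : ℕ} [NeZero n] (h : m ∣ n) (x : ZMod n) :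
    castHom h (ZMod m) x = ((x.val % m : ℕ) : ZMod m) := by
  rw [castHom_apply, cast_eq_val, natCast_mod]

lemma exists_even_le_natCast_eq_iff {p : ℕ} (hp : Odd p) (hp3 : 3 ≤ p) (t : ZMod p) :
    (∃ a : ℕ, a ≤ 2 * p - 3 ∧ Even a ∧ (a : ZMod p) = t) ↔ t ≠ -2 := by
  have : NeZero p := ⟨by omega⟩
  have hneg2 : ((p - 2 : ℕ) : ZMod p) = -2 := by
    rw [Nat.cast_sub (by omega), ZMod.natCast_self, zero_sub, Nat.cast_ofNat]
  constructor
  · rintro ⟨a, ha, hae, rfl⟩ h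
    have hdvd : p ∣ a + 2 := by
      rw [← ZMod.natCast_eq_zero_iff, Nat.cast_add, h]; ring
    obtain ⟨k, hk⟩ := hdvd
    have hk2 : k < 2 := Nat.lt_of_mul_lt_mul_left (a := p) (by omega)
    have hk1 : k = 1 := by interval_cases k <;> omega
    subst hk1
    rw [mul_one] at hk
    exact Nat.not_even_iff_odd.2 hp (hk ▸ hae.add even_two)
  · intro ht
    have hr : t.val ≠ p - 2 := fun h => ht (by rw [← hneg2, ← h, ZMod.natCast_zmod_val])
    rcases Nat.even_or_odd t.val with he | ho
    · exact ⟨t.val, by have := t.val_lt; omega, he, ZMod.natCast_zmod_val t⟩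
    · refine ⟨t.val + p, ?_, ho.add_odd hp, by simp⟩
      have := t.val_lt
      obtain ⟨r, hr'⟩ := ho
      obtain ⟨q, hq⟩ := hp
      omega

lemma forall_even_le_natCast_mul_sub_ne_iff {p : ℕ} [Fact p.Prime] (hp5 : 5 ≤ p) {x y : ZMod p}
    (hy : y ≠ 0) :
    (∀ a : ℕ, a ≤ 2 * p - 3 → Even a → (a : ZMod p) * (x - y) ≠ 3 * y) ↔
      x = y ∨ y = -2 * x := by
  have h3 : (3 : ZMod p) ≠ 0 := by
    rw [← Nat.cast_ofNat, Ne, ZMod.natCast_eq_zero_iff]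
    intro h
    exact absurd (Nat.le_of_dvd (by norm_num) h) (by omega)
  by_cases hxy : x = y
  · simp [hxy, h3, hy]
  have hd : x - y ≠ 0 := sub_ne_zero.2 hxy
  have hodd : Odd p := (Fact.out : p.Prime).odd_of_ne_two (by omega)
  simp only [Ne, ← eq_div_iff hd, hxy, false_or]
  rw [← not_iff_not]
  push Not
  rw [exists_even_le_natCast_eq_iff hodd (by omega), Ne, div_eq_iff hd]
  refine not_congr ⟨fun h => ?_, fun h => ?_⟩ <;> linear_combination h

section TwoP

variable {p : ℕ} {i j : ZMod (2 * p)}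

open ZMod

local notation "ε" => castHom (dvd_mul_right 2 p) (ZMod 2)

local notation "π" => castHom (dvd_mul_left p 2) (ZMod p)

lemma nsmul_add_nsmul_eq_zero_iff (hp : Nat.Coprime 2 p) (hi : ε i = 1) (hj : ε j = 0)
    (a b : ℕ) : a • i + b • j = 0 ↔ Even a ∧ (a : ZMod p) * π i + b * π j = 0 := by
  simp only [eq_zero_iff_castHom_eq_zero hp, nsmul_eq_mul, map_add, map_mul, map_natCast, hi, hj,
    mul_one, mul_zero, add_zero, natCast_eq_zero_iff_even]

lemma isZeroSumfree_iff_forall_even (hp : Nat.Coprime 2 p) (hp2 : 2 ≤ p) (hi : ε i = 1)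
    (hj : ε j = 0) :
    IsZeroSumfree (2 * p) (2 * p - 3) {i, j} ↔
      ∀ a : ℕ, a ≤ 2 * p - 3 → Even a → (a : ZMod p) * (π i - π j) ≠ 3 * π j := by
  have hij : i ≠ j := fun h => one_ne_zero (hi.symm.trans (h ▸ hj))
  have hcast : ∀ a b : ℕ, a + b = 2 * p - 3 → (a : ZMod p) + b = -3 := fun a b hab => by
    rw [← Nat.cast_add, hab, Nat.cast_sub (by omega), Nat.cast_mul, natCast_self]
    push_cast; ring
  rw [isZeroSumfree_pair_iff hij]
  constructor
  · intro H a ha hae h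
    have hab : a + (2 * p - 3 - a) = 2 * p - 3 := by omega
    refine H a _ hab ((nsmul_add_nsmul_eq_zero_iff hp hi hj _ _).2 ⟨hae, ?_⟩)
    linear_combination h + π j * hcast _ _ hab
  · intro H a b hab h
    obtain ⟨hae, h⟩ := (nsmul_add_nsmul_eq_zero_iff hp hi hj a b).1 h
    refine H a (by omega) hae ?_
    linear_combination h - π j * hcast _ _ hab

lemma eq_neg_two_mul_iff (hp : Nat.Coprime 2 p) (hj : ε j = 0) :
    j = -2 * i ↔ π j = -2 * π i := by
  rw [← sub_eq_zero, eq_zero_iff_castHom_eq_zero hp, ← sub_eq_zero (a := π j)]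
  simp only [map_sub, map_mul, map_neg, map_ofNat, hj]
  exact and_iff_right (by simp [show (-2 : ZMod 2) = 0 by decide])

end TwoP

theorem stmt15 (p : ℕ) (hp : p.Prime) (hp5 : 5 ≤ p) (i j : ZMod (2 * p))
    (hi : i.val % 2 = 1) (hj : j.val % 2 = 0) (hj0 : j ≠ 0) :
    IsZeroSumfree (2 * p) (2 * p - 3) {i, j}
      ↔ (ZMod.castHom (dvd_mul_left p 2) (ZMod p) i
            = ZMod.castHom (dvd_mul_left p 2) (ZMod p) j ∨ j = -2 * i) := by
  have : Fact p.Prime := ⟨hp⟩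
  have : NeZero (2 * p) := ⟨by omega⟩
  have hcop : Nat.Coprime 2 p := (Nat.coprime_primes Nat.prime_two hp).2 (by omega)
  have hi2 : ZMod.castHom (dvd_mul_right 2 p) (ZMod 2) i = 1 := by
    rw [ZMod.castHom_eq_natCast_val_mod, hi, Nat.cast_one]
  have hj2 : ZMod.castHom (dvd_mul_right 2 p) (ZMod 2) j = 0 := by
    rw [ZMod.castHom_eq_natCast_val_mod, hj, Nat.cast_zero]
  have hjp : ZMod.castHom (dvd_mul_left p 2) (ZMod p) j ≠ 0 :=
    fun h => hj0 ((ZMod.eq_zero_iff_castHom_eq_zero hcop j).2 ⟨hj2, h⟩)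
  rw [isZeroSumfree_iff_forall_even hcop (by omega) hi2 hj2, eq_neg_two_mul_iff hcop hj2]
  exact forall_even_le_natCast_mul_sub_ne_iff hp5 hjp
end
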